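/- arXiv:2504.02245 — 3 statements merged into one kernel-verified Lean document; each statement's English description precedes it below -/
import Mathlib

section
/- Let λ > 0 and let X ∈ ℝ^{m×n} be a matrix with rows x¹, …, xᵐ. Define Y* ∈ ℝ^{m×n} row-wise by: row j of Y* equals xʲ if ‖xʲ‖₂² > 2λ and equals the zero row if ‖xʲ‖₂² ≤ 2λ. Then Y* is a global minimizer over Y ∈ ℝ^{m×n} of the function F(Y) = λ‖Y‖_{2,0} + (1/2)‖Y − X‖_F², i.e., the row-wise group hard-thresholding operator with threshold √(2λ) computes the proximal operator of λ‖·‖_{2,0}. -/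
theorem stmt_3 (m n : ℕ) (lam : ℝ) (hlam : 0 < lam)
    (X Ystar : Fin m → Fin n → ℝ)
    (hY : ∀ j : Fin m, Ystar j = if (∑ c, (X j c)^2) > 2*lam then X j else 0) :
    ∀ Y : Fin m → Fin n → ℝ,
      lam * (∑ j, if Ystar j ≠ 0 then (1:ℝ) else 0)
        + (1/2) * ∑ j, ∑ c, (Ystar j c - X j c)^2
      ≤ lam * (∑ j, if Y j ≠ 0 then (1:ℝ) else 0)
        + (1/2) * ∑ j, ∑ c, (Y j c - X j c)^2 := by
  intro Y
  have key : ∀ j : Fin m,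
      lam * (if Ystar j ≠ 0 then (1:ℝ) else 0) + (1/2) * ∑ c, (Ystar j c - X j c)^2
      ≤ lam * (if Y j ≠ 0 then (1:ℝ) else 0) + (1/2) * ∑ c, (Y j c - X j c)^2 := by
    intro j
    have hs : (0:ℝ) ≤ ∑ c, (Y j c - X j c)^2 := Finset.sum_nonneg fun c _ => sq_nonneg _
    have ha : (0:ℝ) ≤ ∑ c, (X j c)^2 := Finset.sum_nonneg fun c _ => sq_nonneg _
    by_cases h : (∑ c, (X j c)^2) > 2*lam
    · have hj : Ystar j = X j := by rw [hY j, if_pos h]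
      have hz : ∑ c, (Ystar j c - X j c)^2 = 0 := by
        apply Finset.sum_eq_zero; intro c _; rw [hj]; ring
      rw [hz]
      have hI : (if Ystar j ≠ 0 then (1:ℝ) else 0) ≤ 1 := by split <;> norm_num
      by_cases hYj : Y j = 0
      · have : ∑ c, (Y j c - X j c)^2 = ∑ c, (X j c)^2 := by
          apply Finset.sum_congr rfl; intro c _
          rw [hYj]; simp
        have h2 : (if Y j ≠ 0 then (1:ℝ) else 0) = 0 := if_neg (by simp [hYj])
        rw [this, h2]
        nlinarith
      · rw [if_pos hYj]
        nlinarith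
    · have hj : Ystar j = 0 := by rw [hY j, if_neg h]
      have hz : ∑ c, (Ystar j c - X j c)^2 = ∑ c, (X j c)^2 := by
        apply Finset.sum_congr rfl; intro c _
        rw [hj]; simp
      rw [hz, if_neg (by simpa using hj)]
      push_neg at h
      by_cases hYj : Y j = 0
      · have : ∑ c, (Y j c - X j c)^2 = ∑ c, (X j c)^2 := by
          apply Finset.sum_congr rfl; intro c _
          rw [hYj]; simp
        rw [this, if_neg (by simpa using hYj)]
      · rw [if_pos hYj]
        nlinarith
  calc lam * (∑ j, if Ystar j ≠ 0 then (1:ℝ) else 0)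
        + (1/2) * ∑ j, ∑ c, (Ystar j c - X j c)^2
      = ∑ j, (lam * (if Ystar j ≠ 0 then (1:ℝ) else 0)
          + (1/2) * ∑ c, (Ystar j c - X j c)^2) := by
        rw [Finset.sum_add_distrib, ← Finset.mul_sum, ← Finset.mul_sum]
    _ ≤ ∑ j, (lam * (if Y j ≠ 0 then (1:ℝ) else 0)
          + (1/2) * ∑ c, (Y j c - X j c)^2) := Finset.sum_le_sum fun j _ => key j
    _ = _ := by rw [Finset.sum_add_distrib, ← Finset.mul_sum, ← Finset.mul_sum]
end

section
/- Let μ > 0, γ > 0, let A, W ∈ ℝ^{p×q} be matrices, and set B = A − (1/γ)W. Define Z* ∈ ℝ^{p×q} entrywise by z*_{ij} = b_{ij} if b_{ij}² > 2μ/γ and z*_{ij} = 0 if b_{ij}² ≤ 2μ/γ. Then Z* is a global minimizer over Z ∈ ℝ^{p×q} of the function F(Z) = μ‖Z‖₀ + ⟨Z − A, W⟩ + (γ/2)‖Z − A‖_F². -/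
lemma per_entry (μ γ a w z zs : ℝ) (hμ : 0 < μ) (hγ : 0 < γ)
    (hzs : zs = if (a - (1/γ)*w)^2 > 2*μ/γ then (a - (1/γ)*w) else 0) :
    μ * (if zs ≠ 0 then (1:ℝ) else 0) + (zs - a) * w + (γ/2) * (zs - a)^2
      ≤ μ * (if z ≠ 0 then (1:ℝ) else 0) + (z - a) * w + (γ/2) * (z - a)^2 := by
  obtain ⟨b, hb⟩ : ∃ b : ℝ, b = a - (1/γ)*w := ⟨_, rfl⟩
  rw [← hb] at hzs
  have hid : ∀ x : ℝ, (x - a) * w + (γ/2) * (x - a)^2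
      = (γ/2) * (x - b)^2 - w^2/(2*γ) := by
    intro x
    rw [hb]
    field_simp
    ring
  have hgoal : μ * (if zs ≠ 0 then (1:ℝ) else 0) + (γ/2) * (zs - b)^2
      ≤ μ * (if z ≠ 0 then (1:ℝ) else 0) + (γ/2) * (z - b)^2 := by
    by_cases hc : b^2 > 2*μ/γ
    · rw [hzs, if_pos hc]
      have hbne : b ≠ 0 := by
        intro h
        rw [h] at hc
        have : (0:ℝ) < 2*μ/γ := by positivity
        simp at hc; nlinarith
      rw [if_pos hbne]
      have e1 : (b - b)^2 = (0:ℝ) := by ring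
      have e2 : (0 - b)^2 = b^2 := by ring
      by_cases hz : z = 0
      · subst hz
        simp only [ne_eq, not_true_eq_false, if_neg, if_false]
        have h2 : 2*μ/γ < b^2 := hc
        have h3 : 2*μ < γ * b^2 := by
          rw [div_lt_iff₀ hγ] at h2; linarith
        rw [e1, e2]; linarith
      · rw [if_pos hz]
        rw [e1]
        have := mul_nonneg hγ.le (sq_nonneg (z - b))
        linarith
    · rw [hzs, if_neg hc]
      simp only [ne_eq, not_true_eq_false, if_neg, if_false]
      push_neg at hc
      have h2 : γ * b^2 ≤ 2*μ := by
        rw [le_div_iff₀ hγ] at hc; linarith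
      have e2 : (0 - b)^2 = b^2 := by ring
      by_cases hz : z = 0
      · subst hz; simp
      · rw [if_pos hz, e2]
        have := mul_nonneg hγ.le (sq_nonneg (z - b))
        linarith
  linarith [hid zs, hid z]

theorem stmt_4 (p q : ℕ) (μ γ : ℝ) (hμ : 0 < μ) (hγ : 0 < γ)
    (A W B Zstar : Fin p → Fin q → ℝ)
    (hB : ∀ i j, B i j = A i j - (1/γ) * W i j)
    (hZ : ∀ i j, Zstar i j = if (B i j)^2 > 2*μ/γ then B i j else 0) :
    ∀ Z : Fin p → Fin q → ℝ,
      μ * (∑ i, ∑ j, if Zstar i j ≠ 0 then (1:ℝ) else 0)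
        + (∑ i, ∑ j, (Zstar i j - A i j) * W i j)
        + (γ/2) * ∑ i, ∑ j, (Zstar i j - A i j)^2
      ≤ μ * (∑ i, ∑ j, if Z i j ≠ 0 then (1:ℝ) else 0)
        + (∑ i, ∑ j, (Z i j - A i j) * W i j)
        + (γ/2) * ∑ i, ∑ j, (Z i j - A i j)^2 := by
  intro Z
  have key : ∀ i j, μ * (if Zstar i j ≠ 0 then (1:ℝ) else 0)
      + (Zstar i j - A i j) * W i j + (γ/2) * (Zstar i j - A i j)^2
      ≤ μ * (if Z i j ≠ 0 then (1:ℝ) else 0)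
      + (Z i j - A i j) * W i j + (γ/2) * (Z i j - A i j)^2 := by
    intro i j
    apply per_entry μ γ (A i j) (W i j) (Z i j) (Zstar i j) hμ hγ
    rw [hZ i j, ← hB i j]
  have hsum : ∀ (X : Fin p → Fin q → ℝ),
      μ * (∑ i, ∑ j, if X i j ≠ 0 then (1:ℝ) else 0)
        + (∑ i, ∑ j, (X i j - A i j) * W i j)
        + (γ/2) * ∑ i, ∑ j, (X i j - A i j)^2
      = ∑ i, ∑ j, (μ * (if X i j ≠ 0 then (1:ℝ) else 0)
          + (X i j - A i j) * W i j + (γ/2) * (X i j - A i j)^2) := by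
    intro X
    simp only [Finset.mul_sum, Finset.sum_add_distrib]
  rw [hsum Zstar, hsum Z]
  exact Finset.sum_le_sum fun i _ => Finset.sum_le_sum fun j _ => key i j
end

section
/- Let λ > 0, α > 0, let M, V ∈ ℝ^{m×n} be matrices, and set X = M − (1/α)V, with rows x¹, …, xᵐ. Define Y* ∈ ℝ^{m×n} row-wise by: row j of Y* equals xʲ if ‖xʲ‖₂² > 2λ/α and equals the zero row if ‖xʲ‖₂² ≤ 2λ/α. Then Y* is a global minimizer over Y ∈ ℝ^{m×n} of the function F(Y) = λ‖Y‖_{2,0} + ⟨Y − M, V⟩ + (α/2)‖Y − M‖_F². -/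
open Finset

private lemma sq_transform (n : ℕ) (α : ℝ) (hα : 0 < α) (mrow vrow x w : Fin n → ℝ)
    (hx : ∀ c, x c = mrow c - (1/α) * vrow c) :
    (∑ c, (w c - mrow c) * vrow c) + (α/2) * ∑ c, (w c - mrow c)^2
      = (α/2) * (∑ c, (w c - x c)^2) - ∑ c, (vrow c)^2 / (2*α) := by
  rw [Finset.mul_sum, Finset.mul_sum, ← Finset.sum_add_distrib, ← Finset.sum_sub_distrib]
  refine Finset.sum_congr rfl fun c _ => ?_
  rw [hx c]
  have hα' : α ≠ 0 := ne_of_gt hα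
  field_simp
  ring

private lemma gmin (n : ℕ) (lam α : ℝ) (hlam : 0 < lam) (hα : 0 < α) (x y ys : Fin n → ℝ)
    (hys : ys = if (∑ c, (x c)^2) > 2*lam/α then x else 0) :
    lam * (if ys ≠ 0 then (1:ℝ) else 0) + (α/2) * ∑ c, (ys c - x c)^2
      ≤ lam * (if y ≠ 0 then (1:ℝ) else 0) + (α/2) * ∑ c, (y c - x c)^2 := by
  have hynn : 0 ≤ ∑ c, (y c - x c)^2 := Finset.sum_nonneg fun c _ => sq_nonneg _
  by_cases h : (∑ c, (x c)^2) > 2*lam/α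
  · have hys' : ys = x := by rw [hys, if_pos h]
    subst hys'
    have hpos : 0 < 2*lam/α := by positivity
    have hx0 : ys ≠ 0 := by
      intro h0
      rw [h0] at h
      simp at h
      linarith
    have hL : (∑ c, (ys c - ys c)^2) = 0 := by simp
    rw [hL, if_pos hx0]
    have h2 : 2*lam < (∑ c, (ys c)^2) * α := (div_lt_iff₀ hα).mp h
    by_cases hy0 : y = 0
    · subst hy0
      rw [if_neg (by simp)]
      have he : (∑ c, ((0 : Fin n → ℝ) c - ys c)^2) = ∑ c, (ys c)^2 := by
        exact Finset.sum_congr rfl fun c _ => by simp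
      rw [he]
      nlinarith
    · rw [if_pos hy0]; nlinarith
  · have hys' : ys = 0 := by rw [hys, if_neg h]
    subst hys'
    have hSnn : 0 ≤ ∑ c, (x c)^2 := Finset.sum_nonneg fun c _ => sq_nonneg _
    have hle : (∑ c, (x c)^2) * α ≤ 2*lam := by
      have := not_lt.mp h
      exact (le_div_iff₀ hα).mp this
    rw [if_neg (by simp)]
    have he : (∑ c, ((0 : Fin n → ℝ) c - x c)^2) = ∑ c, (x c)^2 := by
      exact Finset.sum_congr rfl fun c _ => by simp
    rw [he]
    by_cases hy0 : y = 0
    · subst hy0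
      rw [if_neg (by simp), he]
    · rw [if_pos hy0]; nlinarith

theorem stmt_5 (m n : ℕ) (lam α : ℝ) (hlam : 0 < lam) (hα : 0 < α)
    (M V X Ystar : Fin m → Fin n → ℝ)
    (hX : ∀ j c, X j c = M j c - (1/α) * V j c)
    (hY : ∀ j : Fin m, Ystar j = if (∑ c, (X j c)^2) > 2*lam/α then X j else 0) :
    ∀ Y : Fin m → Fin n → ℝ,
      lam * (∑ j, if Ystar j ≠ 0 then (1:ℝ) else 0)
        + (∑ j, ∑ c, (Ystar j c - M j c) * V j c)
        + (α/2) * ∑ j, ∑ c, (Ystar j c - M j c)^2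
      ≤ lam * (∑ j, if Y j ≠ 0 then (1:ℝ) else 0)
        + (∑ j, ∑ c, (Y j c - M j c) * V j c)
        + (α/2) * ∑ j, ∑ c, (Y j c - M j c)^2 := by
  intro Y
  have key : ∀ (W : Fin m → Fin n → ℝ),
      lam * (∑ j, if W j ≠ 0 then (1:ℝ) else 0)
        + (∑ j, ∑ c, (W j c - M j c) * V j c)
        + (α/2) * ∑ j, ∑ c, (W j c - M j c)^2
      = ∑ j, (lam * (if W j ≠ 0 then (1:ℝ) else 0)
          + ((∑ c, (W j c - M j c) * V j c) + (α/2) * ∑ c, (W j c - M j c)^2)) := by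
    intro W
    rw [Finset.mul_sum, Finset.mul_sum, ← Finset.sum_add_distrib, ← Finset.sum_add_distrib]
    exact Finset.sum_congr rfl fun j _ => by ring
  rw [key Ystar, key Y]
  refine Finset.sum_le_sum fun j _ => ?_
  rw [sq_transform n α hα (M j) (V j) (X j) (Ystar j) (hX j),
      sq_transform n α hα (M j) (V j) (X j) (Y j) (hX j)]
  have := gmin n lam α hlam hα (X j) (Y j) (Ystar j) (hY j)
  linarith
end
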